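/- The number of linear k-chord diagrams of length kn with exactly ℓ short chords equals the coefficient of z^ℓ in Σ_{j=0}^{n} ((k(n-j))!/((k!)^{n-j}(n-j)!)) · C(kn - j(k-1), j) · (z-1)^j. -/

import Mathlib

/-!
Write `s(P)` for the number of short chords of a diagram `P`. Expanding
`z ^ s(P) = ((z - 1) + 1) ^ s(P)` and summing over all diagrams, the coefficient of `(z - 1) ^ j`
counts pairs `(P, J)` where `J` is a set of `j` short chords of `P`. Choose `J` first: it is a set
of `j` pairwise disjoint `k`-intervals in `[0, kn)`, and there are `C(kn - j(k-1), j)` of those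
(Pascal's rule, according to whether the last vertex is covered). The rest of `P` is an arbitrary
diagram on the remaining `k(n - j)` vertices, and there are `(km)! / ((k!)^m m!)` diagrams on
`km` vertices (remove the chord through a fixed vertex and recurse).
-/

open scoped Classical

/-- `dCount k n ℓ` is the number of linear `k`-chord diagrams of length `k*n`
with exactly `ℓ` short chords (blocks of `k` consecutive vertices). -/
noncomputable def dCount (k n ℓ : ℕ) : ℕ :=
  Nat.card {P : Finpartition (Finset.range (k * n)) //
    (∀ B ∈ P.parts, B.card = k) ∧
    (P.parts.filter (fun B => ∃ i, B = Finset.Ico i (i + k))).card = ℓ}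

open Finset Polynomial
open scoped Nat

section UniformPartition

variable {α : Type*} [DecidableEq α] {k : ℕ} {s t : Finset α} {P Q J : Finset (Finset α)}

/-- For `s = range (k * n)` these are the linear `k`-chord diagrams, recorded by their sets of
chords. -/
def IsUniformPartition (k : ℕ) (s : Finset α) (P : Finset (Finset α)) : Prop :=
  (∀ B ∈ P, #B = k) ∧ (P : Set (Finset α)).PairwiseDisjoint id ∧ P.sup id = s

noncomputable def uniformPartitions (k : ℕ) (s : Finset α) : Finset (Finset (Finset α)) :=
  s.powerset.powerset.filter (IsUniformPartition k s)

namespace IsUniformPartition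

lemma subset (hP : IsUniformPartition k s P) {B : Finset α} (hB : B ∈ P) : B ⊆ s :=
  hP.2.2 ▸ le_sup (f := id) hB

lemma mem_iff (hP : IsUniformPartition k s P) {a : α} : a ∈ s ↔ ∃ B ∈ P, a ∈ B := by
  rw [← hP.2.2, mem_sup]
  rfl

lemma card_eq (hP : IsUniformPartition k s P) : #s = #P * k := by
  rw [← hP.2.2, sup_eq_biUnion, card_biUnion hP.2.1]
  exact sum_const_nat hP.1

lemma existsUnique_mem (hP : IsUniformPartition k s P) {a : α} (ha : a ∈ s) :
    ∃! B, B ∈ P ∧ a ∈ B := by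
  obtain ⟨B, hB, haB⟩ := hP.mem_iff.1 ha
  exact ⟨B, ⟨hB, haB⟩, fun C ⟨hC, haC⟩ => hP.2.1.elim hC hB (not_disjoint_iff.2 ⟨a, haC, haB⟩)⟩

lemma sdiff (hP : IsUniformPartition k s P) (hJ : J ⊆ P) :
    IsUniformPartition k (s \ J.sup id) (P \ J) := by
  refine ⟨fun B hB => hP.1 B (mem_sdiff.1 hB).1, hP.2.1.subset (by simp), ?_⟩
  ext a
  simp only [mem_sup, mem_sdiff, id, hP.mem_iff, not_exists, not_and]
  constructor
  · rintro ⟨B, ⟨hBP, hBJ⟩, haB⟩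
    refine ⟨⟨B, hBP, haB⟩, fun C hCJ haC => hBJ ?_⟩
    exact hP.2.1.elim (hJ hCJ) hBP (not_disjoint_iff.2 ⟨a, haC, haB⟩) ▸ hCJ
  · rintro ⟨⟨B, hBP, haB⟩, ha⟩
    exact ⟨B, ⟨hBP, fun hBJ => ha B hBJ haB⟩, haB⟩

lemma union (hJ : IsUniformPartition k t J) (hts : t ⊆ s)
    (hQ : IsUniformPartition k (s \ t) Q) : IsUniformPartition k s (Q ∪ J) := by
  have hQJ : ∀ B ∈ Q, ∀ C ∈ J, Disjoint B C := fun B hB C hC =>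
    disjoint_of_subset_left (hQ.subset hB) (disjoint_of_subset_right (hJ.subset hC) sdiff_disjoint)
  refine ⟨fun B hB => (mem_union.1 hB).elim (hQ.1 B) (hJ.1 B), ?_, ?_⟩
  · rw [coe_union, Set.pairwiseDisjoint_union]
    exact ⟨hQ.2.1, hJ.2.1, fun B hB C hC _ => hQJ B hB C hC⟩
  · rw [sup_union, hQ.2.2, hJ.2.2]
    exact sdiff_union_of_subset hts

lemma disjoint_of_sdiff (hQ : IsUniformPartition k (s \ t) Q) (hk : 0 < k)
    (hJ : IsUniformPartition k t J) : Disjoint Q J := by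
  refine disjoint_left.2 fun B hBQ hBJ => ?_
  obtain ⟨a, ha⟩ : B.Nonempty := card_pos.1 (hQ.1 B hBQ ▸ hk)
  exact (mem_sdiff.1 (hQ.subset hBQ ha)).2 (hJ.subset hBJ ha)

end IsUniformPartition

lemma mem_uniformPartitions : P ∈ uniformPartitions k s ↔ IsUniformPartition k s P := by
  rw [uniformPartitions, mem_filter, mem_powerset, and_iff_right_iff_imp]
  exact fun hP B hB => mem_powerset.2 (hP.subset hB)

lemma card_filter_superset_uniformPartitions (hk : 0 < k) (hJ : IsUniformPartition k t J)
    (hts : t ⊆ s) :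
    #((uniformPartitions k s).filter (J ⊆ ·)) = #(uniformPartitions k (s \ t)) := by
  refine card_nbij' (· \ J) (· ∪ J) (fun P hP => ?_) (fun Q hQ => ?_) (fun P hP => ?_)
    (fun Q hQ => ?_)
  · simp only [coe_filter, Set.mem_ofPred_eq, mem_uniformPartitions] at hP
    rw [mem_coe, mem_uniformPartitions, ← hJ.2.2]
    exact hP.1.sdiff hP.2
  · rw [mem_coe, mem_uniformPartitions] at hQ
    simp only [coe_filter, Set.mem_ofPred_eq, mem_uniformPartitions]
    exact ⟨hJ.union hts hQ, subset_union_right⟩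
  · simp only [coe_filter, Set.mem_ofPred_eq] at hP
    exact sdiff_union_of_subset hP.2
  · rw [mem_coe, mem_uniformPartitions] at hQ
    exact union_sdiff_cancel_right (hQ.disjoint_of_sdiff hk hJ)

lemma uniformPartitions_empty (hk : 0 < k) : uniformPartitions k (∅ : Finset α) = {∅} := by
  ext P
  rw [mem_uniformPartitions, mem_singleton]
  refine ⟨fun hP => eq_empty_of_forall_notMem fun B hB => ?_, ?_⟩
  · have hBk := hP.1 B hB
    rw [subset_empty.1 (hP.subset hB), card_empty] at hBk
    exact hk.ne hBk
  · rintro rfl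
    exact ⟨by simp, by simp, rfl⟩

lemma card_uniformPartitions_eq_sum (hk : 0 < k) {a : α} (ha : a ∈ s) :
    #(uniformPartitions k s) =
      ∑ B ∈ (s.powersetCard k).filter ({a} ⊆ ·), #(uniformPartitions k (s \ B)) := by
  set 𝒯 := (s.powersetCard k).filter ({a} ⊆ ·)
  have hblock : ∀ P ∈ uniformPartitions k s, #(𝒯.bipartiteAbove (fun P B => B ∈ P) P) = 1 := by
    intro P hP
    rw [mem_uniformPartitions] at hP
    obtain ⟨B, ⟨hBP, haB⟩, hB⟩ := hP.existsUnique_mem ha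
    refine card_eq_one.2 ⟨B, eq_singleton_iff_unique_mem.2 ⟨?_, fun C hC => ?_⟩⟩
    · simp [𝒯, bipartiteAbove, hBP, haB, hP.subset hBP, hP.1 B hBP]
    · simp only [𝒯, bipartiteAbove, mem_filter, singleton_subset_iff] at hC
      exact hB C ⟨hC.2, hC.1.2⟩
  calc #(uniformPartitions k s)
      = ∑ P ∈ uniformPartitions k s, #(𝒯.bipartiteAbove (fun P B => B ∈ P) P) := by
        rw [sum_congr rfl hblock, card_eq_sum_ones]
    _ = ∑ B ∈ 𝒯, #((uniformPartitions k s).bipartiteBelow (fun P B => B ∈ P) B) :=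
        sum_card_bipartiteAbove_eq_sum_card_bipartiteBelow _
    _ = ∑ B ∈ 𝒯, #(uniformPartitions k (s \ B)) := by
        refine sum_congr rfl fun B hB => ?_
        simp only [𝒯, mem_filter, mem_powersetCard] at hB
        have hsingle : IsUniformPartition k B {B} := ⟨by simpa using hB.1.2, by simp, by simp⟩
        rw [← card_filter_superset_uniformPartitions hk hsingle hB.1.1]
        simp [bipartiteBelow]

lemma choose_mul_factorial_mul_succ (hk : 0 < k) (m : ℕ) :
    (k * m + k - 1).choose (k - 1) * (k * m)! * (k ! * (m + 1)) = (k * (m + 1))! := by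
  obtain ⟨r, rfl⟩ := Nat.exists_eq_add_one_of_ne_zero hk.ne'
  have hsub : (r + 1) * m + (r + 1) - 1 = (r + 1) * m + r := by omega
  have hchoose := Nat.choose_mul_factorial_mul_factorial (Nat.le_add_left r ((r + 1) * m))
  rw [Nat.add_sub_cancel] at hchoose
  rw [hsub, Nat.add_sub_cancel, show (r + 1) * (m + 1) = (r + 1) * m + r + 1 by ring,
    Nat.factorial_succ ((r + 1) * m + r), ← hchoose, Nat.factorial_succ r]
  ring

theorem card_uniformPartitions_mul (hk : 0 < k) :
    ∀ (m : ℕ) (s : Finset α), #s = k * m →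
      #(uniformPartitions k s) * (k ! ^ m * m !) = (k * m)!
  | 0, s, hs => by
    rw [mul_zero, card_eq_zero] at hs
    simp [hs, uniformPartitions_empty hk]
  | m + 1, s, hs => by
    obtain ⟨a, ha⟩ : s.Nonempty := card_pos.1 (by rw [hs]; positivity)
    have hfibre : ∀ B ∈ (s.powersetCard k).filter ({a} ⊆ ·),
        #(uniformPartitions k (s \ B)) * (k ! ^ m * m !) = (k * m)! := by
      intro B hB
      simp only [mem_filter, mem_powersetCard] at hB
      refine card_uniformPartitions_mul hk m _ ?_
      rw [card_sdiff_of_subset hB.1.1, hs, hB.1.2, mul_add_one, Nat.add_sub_cancel]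
    have hthrough : #((s.powersetCard k).filter ({a} ⊆ ·)) = (k * m + k - 1).choose (k - 1) := by
      rw [card_filter_powersetCard_subset _ _ _ (singleton_subset_iff.2 ha)
        (by rwa [card_singleton]), hs, card_singleton, mul_add_one]
    rw [card_uniformPartitions_eq_sum hk ha, ← choose_mul_factorial_mul_succ hk, ← hthrough,
      pow_succ, Nat.factorial_succ]
    calc (∑ B ∈ (s.powersetCard k).filter ({a} ⊆ ·), #(uniformPartitions k (s \ B))) *
          (k ! ^ m * k ! * ((m + 1) * m !))
        = (∑ B ∈ (s.powersetCard k).filter ({a} ⊆ ·),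
            #(uniformPartitions k (s \ B)) * (k ! ^ m * m !)) * (k ! * (m + 1)) := by
          rw [← sum_mul]; ring
      _ = _ := by rw [sum_congr rfl hfibre, sum_const, smul_eq_mul]

end UniformPartition

noncomputable def shortBlocks (k : ℕ) (P : Finset (Finset ℕ)) : Finset (Finset ℕ) :=
  P.filter fun B => ∃ i, B = Ico i (i + k)

noncomputable def shortFamilies (k N j : ℕ) : Finset (Finset (Finset ℕ)) :=
  ((range N).powerset.powersetCard j).filter fun J =>
    (∀ B ∈ J, ∃ i, B = Ico i (i + k)) ∧ (J : Set (Finset ℕ)).PairwiseDisjoint id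

section ShortFamilies

variable {k N j : ℕ} {J : Finset (Finset ℕ)}

lemma mem_shortFamilies :
    J ∈ shortFamilies k N j ↔ #J = j ∧ (∀ B ∈ J, B ⊆ range N ∧ ∃ i, B = Ico i (i + k)) ∧
      (J : Set (Finset ℕ)).PairwiseDisjoint id := by
  simp only [shortFamilies, mem_filter, mem_powersetCard, subset_iff, mem_powerset]
  grind

lemma shortFamilies_zero : shortFamilies k N 0 = {∅} := by
  ext J
  simp only [mem_shortFamilies, card_eq_zero, mem_singleton, and_iff_left_iff_imp]
  rintro rfl
  simp

lemma shortFamilies_eq_empty (hN : N < k) (hj : 0 < j) :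
    shortFamilies k N j = ∅ := by
  refine eq_empty_of_forall_notMem fun J hJ => ?_
  rw [mem_shortFamilies] at hJ
  obtain ⟨B, hB⟩ : J.Nonempty := card_pos.1 (hJ.1 ▸ hj)
  obtain ⟨hBN, i, rfl⟩ := hJ.2.1 B hB
  rw [range_eq_Ico, Ico_subset_Ico_iff (by omega)] at hBN
  omega

/-- A family of short blocks in `range (N + 1)` either avoids `N` or contains the last block
`Ico (N + 1 - k) (N + 1)`, the only short block through `N`. -/
lemma filter_not_mem_shortFamilies_succ (hk : 0 < k) :
    (shortFamilies k (N + 1) j).filter (Ico (N + 1 - k) (N + 1) ∉ ·) = shortFamilies k N j := by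
  ext J
  simp only [mem_filter, mem_shortFamilies]
  constructor
  · rintro ⟨⟨hcard, hshort, hdisj⟩, hlast⟩
    refine ⟨hcard, fun B hB => ⟨fun x hx => ?_, (hshort B hB).2⟩, hdisj⟩
    obtain ⟨hBN, i, rfl⟩ := hshort B hB
    rw [range_eq_Ico, Ico_subset_Ico_iff (by omega)] at hBN
    have hx' := mem_Ico.1 hx
    refine mem_range.2 (lt_of_le_of_ne (by omega) fun hxN => hlast ?_)
    convert hB using 2 <;> omega
  · rintro ⟨hcard, hshort, hdisj⟩
    refine ⟨⟨hcard, fun B hB => ⟨(hshort B hB).1.trans (range_subset_range.2 N.le_succ),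
      (hshort B hB).2⟩, hdisj⟩, fun hlast => ?_⟩
    have := mem_range.1 ((hshort _ hlast).1 (mem_Ico.2 ⟨by omega, N.lt_succ_self⟩))
    omega

lemma card_filter_mem_shortFamilies_succ (hk : 0 < k) (hkN : k ≤ N + 1) :
    #((shortFamilies k (N + 1) (j + 1)).filter (Ico (N + 1 - k) (N + 1) ∈ ·)) =
      #(shortFamilies k (N + 1 - k) j) := by
  set L := Ico (N + 1 - k) (N + 1)
  have hL : ∀ J ∈ shortFamilies k (N + 1 - k) j, L ∉ J := by
    intro J hJ hLJ
    have := (mem_shortFamilies.1 hJ).2.1 L hLJ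
    have := mem_range.1 (this.1 (mem_Ico.2 ⟨le_rfl, by omega⟩))
    omega
  refine card_nbij' (·.erase L) (insert L) (fun J hJ => ?_) (fun J hJ => ?_) (fun J hJ => ?_)
    (fun J hJ => ?_)
  · simp only [coe_filter, Set.mem_ofPred_eq, mem_shortFamilies] at hJ
    obtain ⟨⟨hcard, hshort, hdisj⟩, hLJ⟩ := hJ
    rw [mem_coe, mem_shortFamilies, card_erase_of_mem hLJ, hcard]
    refine ⟨rfl, fun B hB => ⟨fun x hx => ?_, (hshort B (mem_of_mem_erase hB)).2⟩,
      hdisj.subset (by simp)⟩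
    have hBL := hdisj (mem_of_mem_erase hB) hLJ (ne_of_mem_erase hB)
    have hxN := mem_range.1 ((hshort B (mem_of_mem_erase hB)).1 hx)
    have hxL : x ∉ L := disjoint_left.1 hBL hx
    simp only [L, mem_Ico, not_and, not_lt] at hxL
    exact mem_range.2 (by omega)
  · rw [mem_coe] at hJ
    have hLJ := hL J hJ
    rw [mem_shortFamilies] at hJ
    obtain ⟨hcard, hshort, hdisj⟩ := hJ
    simp only [coe_filter, Set.mem_ofPred_eq, mem_shortFamilies, mem_insert_self, and_true]
    refine ⟨by rw [card_insert_of_notMem hLJ, hcard], fun B hB => ?_, ?_⟩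
    · rcases mem_insert.1 hB with rfl | hB
      · exact ⟨fun x hx => mem_range.2 (mem_Ico.1 hx).2, N + 1 - k, by rw [Nat.sub_add_cancel hkN]⟩
      · exact ⟨(hshort B hB).1.trans (range_subset_range.2 (by omega)), (hshort B hB).2⟩
    · rw [coe_insert]
      refine hdisj.insert fun B hB _ => disjoint_right.2 fun x hxB hxL => ?_
      have := mem_range.1 ((hshort B hB).1 hxB)
      have := (mem_Ico.1 hxL).1
      omega
  · simp only [coe_filter, Set.mem_ofPred_eq] at hJ
    exact insert_erase hJ.2
  · exact erase_insert (hL J hJ)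

end ShortFamilies

lemma choose_sub_mul_add_choose {k M j : ℕ} (hk : 0 < k) (hkM : k ≤ M + 1) :
    (M - (j + 1) * (k - 1)).choose (j + 1) + (M + 1 - k - j * (k - 1)).choose j =
      (M + 1 - (j + 1) * (k - 1)).choose (j + 1) := by
  rw [add_one_mul]
  rcases le_or_gt (j * (k - 1) + (k - 1)) M with h | h
  · obtain ⟨R, hR⟩ := Nat.exists_eq_add_of_le h
    rw [show M - (j * (k - 1) + (k - 1)) = R by omega, show M + 1 - k - j * (k - 1) = R by omega,
      show M + 1 - (j * (k - 1) + (k - 1)) = R + 1 by omega, Nat.choose_succ_succ', add_comm]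
  · obtain ⟨i, rfl⟩ : ∃ i, j = i + 1 := Nat.exists_eq_add_one_of_ne_zero (by rintro rfl; omega)
    have : k - 1 ≤ (i + 1) * (k - 1) := Nat.le_mul_of_pos_left _ i.succ_pos
    rw [Nat.choose_eq_zero_of_lt (by omega), Nat.choose_eq_zero_of_lt (by omega),
      Nat.choose_eq_zero_of_lt (by omega)]

theorem card_shortFamilies {k : ℕ} (hk : 0 < k) (N j : ℕ) :
    #(shortFamilies k N j) = (N - j * (k - 1)).choose j := by
  induction N using Nat.strong_induction_on generalizing j with
  | _ N ih =>
  rcases j with _ | j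
  · simp [shortFamilies_zero]
  rcases lt_or_ge N k with hN | hN
  · rw [shortFamilies_eq_empty hN j.succ_pos, card_empty, Nat.choose_eq_zero_of_lt]
    have : k - 1 ≤ (j + 1) * (k - 1) := Nat.le_mul_of_pos_left _ j.succ_pos
    omega
  obtain ⟨M, rfl⟩ : ∃ M, N = M + 1 := Nat.exists_eq_add_one_of_ne_zero (by omega)
  rw [← card_filter_add_card_filter_not (Ico (M + 1 - k) (M + 1) ∈ ·),
    filter_not_mem_shortFamilies_succ hk, card_filter_mem_shortFamilies_succ hk hN,
    ih _ (by omega), ih _ (by omega), add_comm, choose_sub_mul_add_choose hk hN]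

lemma IsUniformPartition.powersetCard_shortBlocks {k N : ℕ} {P : Finset (Finset ℕ)}
    (hP : IsUniformPartition k (range N) P) (j : ℕ) :
    (shortBlocks k P).powersetCard j = (shortFamilies k N j).filter (· ⊆ P) := by
  ext J
  simp only [mem_powersetCard, mem_filter, mem_shortFamilies, shortBlocks, subset_iff]
  constructor
  · rintro ⟨hJ, rfl⟩
    exact ⟨⟨rfl, fun B hB => ⟨fun _ hx => hP.subset (hJ hB).1 hx, (hJ hB).2⟩,
      hP.2.1.subset fun B hB => (hJ hB).1⟩, fun B hB => (hJ hB).1⟩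
  · rintro ⟨⟨rfl, hshort, -⟩, hJP⟩
    exact ⟨fun B hB => ⟨hJP hB, (hshort B hB).2⟩, rfl⟩

lemma isUniformPartition_of_mem_shortFamilies {k N j : ℕ} {J : Finset (Finset ℕ)}
    (hJ : J ∈ shortFamilies k N j) : IsUniformPartition k (J.sup id) J := by
  rw [mem_shortFamilies] at hJ
  refine ⟨fun B hB => ?_, hJ.2.2, rfl⟩
  obtain ⟨i, rfl⟩ := (hJ.2.1 B hB).2
  simp

/-- Double counting pairs (diagram, `j` of its short chords), by first choosing the short chords. -/
lemma sum_card_powersetCard_shortBlocks_mul {k n j : ℕ} (hk : 0 < k) :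
    (∑ P ∈ uniformPartitions k (range (k * n)), #((shortBlocks k P).powersetCard j)) *
        (k ! ^ (n - j) * (n - j)!) =
      (k * n - j * (k - 1)).choose j * (k * (n - j))! := by
  have hfibre : ∀ J ∈ shortFamilies k (k * n) j,
      #((uniformPartitions k (range (k * n))).filter (J ⊆ ·)) * (k ! ^ (n - j) * (n - j)!) =
        (k * (n - j))! := by
    intro J hJ
    have hJ' := isUniformPartition_of_mem_shortFamilies hJ
    have hsub : J.sup id ⊆ range (k * n) :=
      Finset.sup_le fun B hB => ((mem_shortFamilies.1 hJ).2.1 B hB).1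
    rw [card_filter_superset_uniformPartitions hk hJ' hsub]
    refine card_uniformPartitions_mul hk _ _ ?_
    rw [card_sdiff_of_subset hsub, card_range, hJ'.card_eq, (mem_shortFamilies.1 hJ).1,
      Nat.mul_sub, mul_comm j]
  have hswap : ∑ P ∈ uniformPartitions k (range (k * n)), #((shortBlocks k P).powersetCard j) =
      ∑ J ∈ shortFamilies k (k * n) j, #((uniformPartitions k (range (k * n))).filter (J ⊆ ·)) :=
    (sum_congr rfl fun P hP => by
      rw [(mem_uniformPartitions.1 hP).powersetCard_shortBlocks]; rfl).trans
      (sum_card_bipartiteAbove_eq_sum_card_bipartiteBelow fun P J : Finset (Finset ℕ) => J ⊆ P)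
  rw [hswap, sum_mul, sum_congr rfl hfibre, sum_const, smul_eq_mul, card_shortFamilies hk]

lemma add_one_pow_eq_sum_range {R : Type*} [CommSemiring R] (a : R) {m n : ℕ} (hmn : m ≤ n) :
    (a + 1) ^ m = ∑ j ∈ range (n + 1), (m.choose j : R) * a ^ j := by
  rw [add_pow]
  refine sum_subset (range_subset_range.2 (Nat.succ_le_succ hmn)) (fun j _ hj => ?_) |>.trans ?_
  · rw [Nat.choose_eq_zero_of_lt (by simpa using hj)]
    simp
  · exact sum_congr rfl fun j _ => by rw [one_pow, mul_one, mul_comm]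

lemma sum_X_pow_eq_sum_X_sub_one_pow {R ι : Type*} [CommRing R] (s : Finset ι) (f : ι → ℕ)
    {n : ℕ} (hf : ∀ i ∈ s, f i ≤ n) :
    ∑ i ∈ s, (X : R[X]) ^ f i =
      ∑ j ∈ range (n + 1), C (∑ i ∈ s, ((f i).choose j : R)) * (X - 1) ^ j := by
  calc ∑ i ∈ s, (X : R[X]) ^ f i
      = ∑ i ∈ s, ∑ j ∈ range (n + 1), ((f i).choose j : R[X]) * (X - 1) ^ j :=
        sum_congr rfl fun i hi => by rw [← add_one_pow_eq_sum_range _ (hf i hi), sub_add_cancel]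
    _ = _ := by
        rw [sum_comm]
        simp only [map_sum, sum_mul, map_natCast]

lemma coeff_sum_X_pow {R ι : Type*} [Semiring R] (s : Finset ι) (f : ι → ℕ) (ℓ : ℕ) :
    (∑ i ∈ s, (X : R[X]) ^ f i).coeff ℓ = #(s.filter (f · = ℓ)) := by
  simp only [finsetSum_coeff, coeff_X_pow, sum_boole, eq_comm]

lemma natCard_finpartition_uniform {α : Type*} [DecidableEq α] {k : ℕ} (hk : 0 < k)
    (s : Finset α) (p : Finset (Finset α) → Prop) [DecidablePred p] :
    Nat.card {P : Finpartition s // (∀ B ∈ P.parts, #B = k) ∧ p P.parts} =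
      #((uniformPartitions k s).filter p) := by
  have mem {Q} : Q ∈ (uniformPartitions k s).filter p ↔
      ((∀ B ∈ Q, #B = k) ∧ (Q : Set (Finset α)).PairwiseDisjoint id ∧ Q.sup id = s) ∧ p Q := by
    rw [mem_filter, mem_uniformPartitions, IsUniformPartition]
  rw [← Nat.card_eq_finsetCard]
  exact Nat.card_congr
    { toFun P := ⟨P.1.parts, mem.2 ⟨⟨P.2.1, supIndep_iff_pairwiseDisjoint.1 P.1.supIndep,
        P.1.sup_parts⟩, P.2.2⟩⟩
      invFun Q :=
        ⟨⟨Q.1, supIndep_iff_pairwiseDisjoint.2 (mem.1 Q.2).1.2.1, (mem.1 Q.2).1.2.2,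
          fun h => hk.ne (card_empty (α := α) ▸ (mem.1 Q.2).1.1 ⊥ h)⟩,
          (mem.1 Q.2).1.1, (mem.1 Q.2).2⟩
      left_inv P := rfl
      right_inv Q := rfl }

lemma dCount_eq_card_filter {k n ℓ : ℕ} (hk : 0 < k) :
    dCount k n ℓ =
      #((uniformPartitions k (range (k * n))).filter fun P => #(shortBlocks k P) = ℓ) :=
  natCard_finpartition_uniform hk (range (k * n)) fun P => #(shortBlocks k P) = ℓ

/-- The number of linear `k`-chord diagrams of length `kn` with exactly `ℓ` short chords
equals the coefficient of `z^ℓ` in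
`Σ_{j=0}^n ((k(n-j))!/((k!)^{n-j}(n-j)!)) C(kn - j(k-1), j) (z-1)^j`. -/
theorem stmt5 (k n ℓ : ℕ) (hk : 2 ≤ k) :
    (dCount k n ℓ : ℚ) =
      (∑ j ∈ Finset.range (n + 1),
        Polynomial.C (((Nat.factorial (k * (n - j)) : ℚ) /
            (Nat.factorial k ^ (n - j) * Nat.factorial (n - j))) *
          (Nat.choose (k * n - j * (k - 1)) j : ℚ)) *
        (Polynomial.X - 1) ^ j).coeff ℓ := by
  have hk0 : 0 < k := by omega
  have hshort : ∀ P ∈ uniformPartitions k (range (k * n)), #(shortBlocks k P) ≤ n := by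
    intro P hP
    have hcard := (mem_uniformPartitions.1 hP).card_eq
    rw [card_range, mul_comm] at hcard
    exact (card_filter_le _ _).trans (Nat.eq_of_mul_eq_mul_right hk0 hcard).ge
  rw [dCount_eq_card_filter hk0, ← coeff_sum_X_pow, sum_X_pow_eq_sum_X_sub_one_pow _ _ hshort]
  refine congrArg (coeff · ℓ) (sum_congr rfl fun j _ => ?_)
  have hcount := sum_card_powersetCard_shortBlocks_mul hk0 (n := n) (j := j)
  simp only [card_powersetCard] at hcount
  congr 2
  rw [div_mul_eq_mul_div, eq_div_iff (by positivity), ← Nat.cast_sum]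
  exact_mod_cast hcount.trans (mul_comm _ _)
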